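/- Let W(λ) = λ|Ψ⁻⟩⟨Ψ⁻| + (1−λ)(I⊗I)/4 be the Werner state (0 ≤ λ ≤ 1). The minimum measurement strength ε needed so that, after the measurement M₊(ε,n̂) with n̂ in the xz-plane, the CNOT-evolved system dynamics can be generated from a product state with a valid environment Bloch vector (|ζ⃗| ≤ 1), subject to ζ_x = −[√(1−ε²)/n_x + (1−√(1−ε²)) n_x]·(λ/ε), is ε_min(λ) = λ for λ ∈ [0, √3/2] and ε_min(λ) = 2λ√(4λ²−2)/(4λ²−1) for λ ∈ [√3/2, 1]. -/

import Mathlib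

noncomputable section

/-- Feasibility of measurement strength ε for the Werner state W(λ) under CNOT:
there exist n_x ∈ [−1,1]\{0} and ζ_x with |ζ_x| ≤ 1 satisfying
ζ_x = −[√(1−ε²)/n_x + (1−√(1−ε²)) n_x]·(λ/ε) (written in cleared form). -/
def wernerFeasible (lam ε : ℝ) : Prop :=
  0 ≤ ε ∧ ε ≤ 1 ∧
    ∃ nx ζx : ℝ, nx ∈ Set.Icc (-1 : ℝ) 1 ∧ nx ≠ 0 ∧ |ζx| ≤ 1 ∧
      ε * ζx * nx = -(Real.sqrt (1 - ε ^ 2) + (1 - Real.sqrt (1 - ε ^ 2)) * nx ^ 2) * lam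

/-- The claimed minimal measurement strength for W(λ). -/
def wernerEpsMin (lam : ℝ) : ℝ :=
  if lam ≤ Real.sqrt 3 / 2 then lam
  else 2 * lam * Real.sqrt (4 * lam ^ 2 - 2) / (4 * lam ^ 2 - 1)

/-!
Write `s = √(1 - ε²)` and `m = |n_x| ∈ (0, 1]`. Since `|ζ_x| ≤ 1`, feasibility forces
`λ (s + (1 - s) m²) ≤ ε m`, and any `m` attaining equality is a witness with `ζ_x = -1`.
For `s ≥ 1/2` the left side is at least `λ m`, which forces `ε ≥ λ`; for `s < 1/2` already
`ε² > 3/4`. In general AM-GM gives `s + (1 - s) m² ≥ 2 √(s (1 - s)) m`, so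
`4 λ² s (1 - s) ≤ ε² = 1 - s²`, i.e. `s ≤ 1 / (4 λ² - 1)` once `λ > 1/2`; this bound on `s` is
exactly `ε ≥ 2λ√(4λ²-2)/(4λ²-1)`. It beats `ε ≥ λ` precisely when `λ > √3/2`, and is attained
at `m = 1 / √(4 λ² - 2)`.
-/

open Real Set

lemma le_add_one_sub_mul_sq {s m : ℝ} (hs : 1 / 2 ≤ s) (hm0 : 0 ≤ m) (hm1 : m ≤ 1) :
    m ≤ s + (1 - s) * m ^ 2 := by
  nlinarith [mul_nonneg (sub_nonneg.2 hm1) (sub_nonneg.2 hs)]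

lemma four_mul_mul_sq_le_sq (s m : ℝ) : 4 * (s * (1 - s)) * m ^ 2 ≤ (s + (1 - s) * m ^ 2) ^ 2 := by
  nlinarith [sq_nonneg (s - (1 - s) * m ^ 2)]

lemma sqrt_one_sub_sq_mem_Icc (ε : ℝ) : √(1 - ε ^ 2) ∈ Icc 0 1 :=
  ⟨sqrt_nonneg _, sqrt_le_one.2 (by nlinarith)⟩

lemma three_lt_four_mul_sq {lam : ℝ} (h : √3 / 2 < lam) : 3 < 4 * lam ^ 2 := by
  have := (sqrt_lt' (by linarith [sqrt_nonneg 3] : (0 : ℝ) < 2 * lam)).1 (by linarith)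
  linarith

lemma four_mul_sq_le_three {lam : ℝ} (h0 : 0 ≤ lam) (h : lam ≤ √3 / 2) : 4 * lam ^ 2 ≤ 3 := by
  have := (le_sqrt (x := 2 * lam) (y := 3) (by positivity) (by norm_num)).1 (by linarith)
  linarith

lemma wernerFeasible_of_mul_eq {lam ε m : ℝ} (h0 : 0 ≤ ε) (h1 : ε ≤ 1) (hm : m ∈ Ioc 0 1)
    (h : ε * m = lam * (√(1 - ε ^ 2) + (1 - √(1 - ε ^ 2)) * m ^ 2)) : wernerFeasible lam ε := by
  refine ⟨h0, h1, m, -1, ⟨by linarith [hm.1], hm.2⟩, hm.1.ne', by norm_num, ?_⟩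
  linear_combination -h

section wernerEpsMin

variable {lam : ℝ} (h : √3 / 2 < lam)
include h

lemma wernerEpsMin_of_lt :
    wernerEpsMin lam = 2 * lam * √(4 * lam ^ 2 - 2) / (4 * lam ^ 2 - 1) :=
  if_neg h.not_ge

lemma wernerEpsMin_pos_of_lt : 0 < wernerEpsMin lam := by
  have := three_lt_four_mul_sq h
  have : 0 < lam := (by positivity : (0 : ℝ) < √3 / 2).trans h
  have : 0 < √(4 * lam ^ 2 - 2) := sqrt_pos.2 (by linarith)
  have : 0 < 4 * lam ^ 2 - 1 := by linarith
  rw [wernerEpsMin_of_lt h]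
  positivity

lemma sq_wernerEpsMin_of_lt : wernerEpsMin lam ^ 2 = 1 - (4 * lam ^ 2 - 1)⁻¹ ^ 2 := by
  have := three_lt_four_mul_sq h
  have hr : √(4 * lam ^ 2 - 2) ^ 2 = 4 * lam ^ 2 - 2 := sq_sqrt (by linarith)
  have : 4 * lam ^ 2 - 1 ≠ 0 := by linarith
  rw [wernerEpsMin_of_lt h]
  set r := √(4 * lam ^ 2 - 2)
  set t := 4 * lam ^ 2 - 1
  field_simp
  linear_combination 4 * lam ^ 2 * hr

lemma wernerFeasible_wernerEpsMin_of_lt : wernerFeasible lam (wernerEpsMin lam) := by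
  have := three_lt_four_mul_sq h
  have he := wernerEpsMin_pos_of_lt h
  have ht : 0 < 4 * lam ^ 2 - 1 := by linarith
  have hr1 : 1 < √(4 * lam ^ 2 - 2) := by rw [lt_sqrt zero_le_one]; linarith
  have hr : √(4 * lam ^ 2 - 2) ^ 2 = 4 * lam ^ 2 - 2 := sq_sqrt (by linarith)
  have hs : √(1 - wernerEpsMin lam ^ 2) = (4 * lam ^ 2 - 1)⁻¹ := by
    rw [sq_wernerEpsMin_of_lt h, sub_sub_cancel, sqrt_sq (inv_nonneg.2 ht.le)]
  have he1 : wernerEpsMin lam ≤ 1 := by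
    nlinarith [sq_wernerEpsMin_of_lt h, sq_nonneg (4 * lam ^ 2 - 1)⁻¹]
  refine wernerFeasible_of_mul_eq he.le he1 (m := (√(4 * lam ^ 2 - 2))⁻¹)
    ⟨by positivity, inv_le_one_of_one_le₀ hr1.le⟩ ?_
  rw [hs, wernerEpsMin_of_lt h]
  set r := √(4 * lam ^ 2 - 2)
  set t := 4 * lam ^ 2 - 1
  have hr' : r ^ 2 = t - 1 := by rw [hr]; ring
  have : r ≠ 0 := by positivity
  field_simp
  linear_combination lam * hr'

end wernerEpsMin

namespace wernerFeasible

variable {lam ε : ℝ}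

lemma sq_sqrt_one_sub_sq (h : wernerFeasible lam ε) : √(1 - ε ^ 2) ^ 2 = 1 - ε ^ 2 :=
  sq_sqrt (by nlinarith [h.1, h.2.1])

lemma exists_mul_le (h : wernerFeasible lam ε) :
    ∃ m ∈ Ioc (0 : ℝ) 1, lam * (√(1 - ε ^ 2) + (1 - √(1 - ε ^ 2)) * m ^ 2) ≤ ε * m := by
  obtain ⟨hε0, -, nx, ζx, ⟨hn1, hn2⟩, hnx, hζ, heq⟩ := h
  obtain ⟨hs0, hs1⟩ := sqrt_one_sub_sq_mem_Icc ε
  set s := √(1 - ε ^ 2)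
  have hX : 0 ≤ s + (1 - s) * nx ^ 2 := by nlinarith [sq_nonneg nx]
  refine ⟨|nx|, ⟨abs_pos.2 hnx, abs_le.2 ⟨hn1, hn2⟩⟩, ?_⟩
  rw [sq_abs]
  calc lam * (s + (1 - s) * nx ^ 2)
      ≤ |lam| * (s + (1 - s) * nx ^ 2) := mul_le_mul_of_nonneg_right (le_abs_self lam) hX
    _ = |ε * ζx * nx| := by rw [heq, abs_mul, abs_neg, abs_of_nonneg hX, mul_comm]
    _ = ε * |ζx| * |nx| := by rw [abs_mul, abs_mul, abs_of_nonneg hε0]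
    _ ≤ ε * |nx| := by gcongr; exact mul_le_of_le_one_right hε0 hζ

lemma pos (hlam : 0 < lam) (h : wernerFeasible lam ε) : 0 < ε := by
  obtain ⟨hε0, -, nx, ζx, -, -, -, heq⟩ := h
  refine hε0.lt_of_ne fun hε => ?_
  subst hε
  norm_num at heq
  linarith

lemma le_of_four_mul_sq_le_three (hlam : 0 ≤ lam) (hsq : 4 * lam ^ 2 ≤ 3)
    (h : wernerFeasible lam ε) : lam ≤ ε := by
  obtain ⟨m, ⟨hm0, hm1⟩, hbound⟩ := h.exists_mul_le
  have hs2 := h.sq_sqrt_one_sub_sq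
  rcases le_or_gt (1 / 2) √(1 - ε ^ 2) with hs | hs
  · have : lam * m ≤ ε * m :=
      (mul_le_mul_of_nonneg_left (le_add_one_sub_mul_sq hs hm0.le hm1) hlam).trans hbound
    exact le_of_mul_le_mul_right this hm0
  · nlinarith [sqrt_nonneg (1 - ε ^ 2), h.1]

lemma four_mul_sq_mul_le (hlam : 0 ≤ lam) (h : wernerFeasible lam ε) :
    4 * lam ^ 2 * (√(1 - ε ^ 2) * (1 - √(1 - ε ^ 2))) ≤ ε ^ 2 := by
  obtain ⟨m, ⟨hm0, -⟩, hbound⟩ := h.exists_mul_le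
  obtain ⟨hs0, hs1⟩ := sqrt_one_sub_sq_mem_Icc ε
  set s := √(1 - ε ^ 2)
  have hX : 0 ≤ lam * (s + (1 - s) * m ^ 2) := by positivity
  have : 4 * lam ^ 2 * (s * (1 - s)) * m ^ 2 ≤ ε ^ 2 * m ^ 2 := calc
    _ = lam ^ 2 * (4 * (s * (1 - s)) * m ^ 2) := by ring
    _ ≤ lam ^ 2 * (s + (1 - s) * m ^ 2) ^ 2 := by gcongr; exact four_mul_mul_sq_le_sq s m
    _ = (lam * (s + (1 - s) * m ^ 2)) ^ 2 := by ring
    _ ≤ (ε * m) ^ 2 := by gcongr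
    _ = ε ^ 2 * m ^ 2 := by ring
  exact le_of_mul_le_mul_right this (by positivity)

lemma sqrt_one_sub_sq_le (hlam : 1 / 2 < lam) (h : wernerFeasible lam ε) :
    √(1 - ε ^ 2) ≤ (4 * lam ^ 2 - 1)⁻¹ := by
  have hε := h.pos (by linarith)
  have hbound := h.four_mul_sq_mul_le (by linarith)
  have hs2 := h.sq_sqrt_one_sub_sq
  have hs0 := sqrt_nonneg (1 - ε ^ 2)
  have hs1 : √(1 - ε ^ 2) < 1 := by nlinarith
  have ht : 0 < 4 * lam ^ 2 - 1 := by nlinarith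
  rw [← one_div, le_div_iff₀ ht]
  -- `4 λ² s (1 - s) ≤ 1 - s²` divided by `1 - s > 0`
  nlinarith

lemma wernerEpsMin_le (hlam : √3 / 2 < lam) (h : wernerFeasible lam ε) :
    wernerEpsMin lam ≤ ε := by
  have h3 : 1 < √3 := (lt_sqrt zero_le_one).2 (by norm_num)
  have hs := h.sqrt_one_sub_sq_le (by linarith)
  have hs2 := h.sq_sqrt_one_sub_sq
  rw [← pow_le_pow_iff_left₀ (wernerEpsMin_pos_of_lt hlam).le h.1 two_ne_zero,
    sq_wernerEpsMin_of_lt hlam]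
  nlinarith [sqrt_nonneg (1 - ε ^ 2)]

end wernerFeasible

/-- the minimum ε making the Werner state dynamics U-generable by
a product state is λ on [0,√3/2] and 2λ√(4λ²−2)/(4λ²−1) on [√3/2,1]. -/
theorem werner_min_strength (lam : ℝ) (h0 : 0 ≤ lam) (h1 : lam ≤ 1) :
    IsLeast {ε : ℝ | wernerFeasible lam ε} (wernerEpsMin lam) := by
  rcases le_or_gt lam (√3 / 2) with hlam | hlam
  · rw [wernerEpsMin, if_pos hlam]
    refine ⟨wernerFeasible_of_mul_eq h0 h1 (m := 1) ⟨one_pos, le_rfl⟩ (by ring), fun ε hε => ?_⟩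
    exact hε.le_of_four_mul_sq_le_three h0 (four_mul_sq_le_three h0 hlam)
  · exact ⟨wernerFeasible_wernerEpsMin_of_lt hlam, fun ε hε => hε.wernerEpsMin_le hlam⟩
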